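/- Let μ^N be a probability measure on ℝ^d×ℝ^d with spatial marginal ρ^N, let ρ be a probability density on ℝ^d, and let u ∈ (L^∞ ∩ Lip)(ℝ^d;ℝ^d). Then the bounded Lipschitz distance between μ^N and the monokinetic measure ρ(x)dx ⊗ δ_{u(x)}(dv) satisfies: d_BL²(μ^N, ρ δ_u) ≤ C ∫_{ℝ^d×ℝ^d} |v − u(x)|² μ^N(dx,dv) + C d_BL²(ρ^N, ρ), where C > 0 depends only on ‖u‖_{Lip}. -/

import Mathlib

/-!
Fix a test function `φ` with `|φ| ≤ 1` and `Lip φ ≤ 1`, and set `ψ x = φ (x, u x)`. Then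
`∫ φ dμ - ∫ φ d(ρδ_u) = ∫ (φ (x, v) - ψ x) dμ + (∫ ψ dρ^N - ∫ ψ ρ dx)`. The first term is at most
`∫ |v - u x| dμ ≤ (∫ |v - u x|² dμ)^(1/2)` by Cauchy–Schwarz, and since `ψ` is bounded by
`K = max 1 (Lip u)` and `K`-Lipschitz, the second is at most `K d_BL(ρ^N, ρ)`. Squaring gives the
bound with `C = 2 K²`.
-/

open MeasureTheory Set Finset
open scoped ENNReal

noncomputable section

/-- The bounded Lipschitz distance between two measures. -/
def dBL {α : Type*} [MeasurableSpace α] [PseudoEMetricSpace α]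
    (μ ν : Measure α) : ℝ :=
  sSup { r : ℝ | ∃ φ : α → ℝ, (∀ z, |φ z| ≤ 1) ∧ LipschitzWith 1 φ ∧
    r = |(∫ z, φ z ∂μ) - ∫ z, φ z ∂ν| }

/-- The monokinetic measure `ρ(x)dx ⊗ δ_{u(x)}(dv)` on phase space, i.e. the
pushforward of the measure with density `ρ` under `x ↦ (x, u(x))`, so that
`∫ φ d(ρδ_u) = ∫ φ(x,u(x)) ρ(x) dx`. -/
def monokinetic {d : ℕ} (ρ : EuclideanSpace ℝ (Fin d) → ℝ)
    (u : EuclideanSpace ℝ (Fin d) → EuclideanSpace ℝ (Fin d)) :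
    Measure (EuclideanSpace ℝ (Fin d) × EuclideanSpace ℝ (Fin d)) :=
  Measure.map (fun y => (y, u y)) (volume.withDensity (fun y => ENNReal.ofReal (ρ y)))

open scoped NNReal

section BoundedLipschitz

variable {α : Type*} [MeasurableSpace α] [PseudoEMetricSpace α]

lemma dBL_nonneg (μ ν : Measure α) : 0 ≤ dBL μ ν :=
  Real.sSup_nonneg (by rintro r ⟨φ, -, -, rfl⟩; exact abs_nonneg _)

variable {μ ν : Measure α}

lemma dBL_le_of_forall {c : ℝ} (hc : 0 ≤ c)
    (h : ∀ φ : α → ℝ, (∀ z, |φ z| ≤ 1) → LipschitzWith 1 φ →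
      |∫ z, φ z ∂μ - ∫ z, φ z ∂ν| ≤ c) :
    dBL μ ν ≤ c :=
  Real.sSup_le (by rintro r ⟨φ, hφ, hφ', rfl⟩; exact h φ hφ hφ') hc

variable [IsFiniteMeasure μ] [IsFiniteMeasure ν]

lemma abs_integral_sub_le_dBL {φ : α → ℝ} (hφ : ∀ z, |φ z| ≤ 1) (hφ' : LipschitzWith 1 φ) :
    |∫ z, φ z ∂μ - ∫ z, φ z ∂ν| ≤ dBL μ ν := by
  refine le_csSup ⟨μ.real univ + ν.real univ, ?_⟩ ⟨φ, hφ, hφ', rfl⟩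
  rintro r ⟨ψ, hψ, -, rfl⟩
  calc |∫ z, ψ z ∂μ - ∫ z, ψ z ∂ν| ≤ ‖∫ z, ψ z ∂μ‖ + ‖∫ z, ψ z ∂ν‖ := abs_sub _ _
    _ ≤ 1 * μ.real univ + 1 * ν.real univ :=
      add_le_add (norm_integral_le_of_norm_le_const (.of_forall fun z => hψ z))
        (norm_integral_le_of_norm_le_const (.of_forall fun z => hψ z))
    _ = μ.real univ + ν.real univ := by ring

lemma abs_integral_sub_le_mul_dBL {φ : α → ℝ} {K : ℝ≥0} (hφ : ∀ z, |φ z| ≤ K)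
    (hφ' : LipschitzWith K φ) :
    |∫ z, φ z ∂μ - ∫ z, φ z ∂ν| ≤ K * dBL μ ν := by
  rcases eq_or_ne K 0 with rfl | hK
  · have hφ0 : ∀ z, φ z = 0 := fun z => abs_nonpos_iff.mp (by simpa using hφ z)
    simp [hφ0]
  have hK' : (0 : ℝ) < K := by positivity
  have hscaled := abs_integral_sub_le_dBL (μ := μ) (ν := ν) (φ := fun z => (K : ℝ)⁻¹ * φ z)
    (fun z => by rw [abs_mul, abs_inv, NNReal.abs_eq, inv_mul_le_one₀ hK']; exact hφ z)
    (by simpa [hK, Function.comp_def] using (lipschitzWith_smul (K : ℝ)⁻¹).comp hφ')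
  rwa [integral_const_mul, integral_const_mul, ← mul_sub, abs_mul, abs_inv, NNReal.abs_eq,
    inv_mul_le_iff₀ hK'] at hscaled

end BoundedLipschitz

theorem integral_le_sqrt_integral_sq {Ω : Type*} [MeasurableSpace Ω] {μ : Measure Ω}
    [IsProbabilityMeasure μ] {f : Ω → ℝ} (hf : MemLp f 2 μ) :
    ∫ x, f x ∂μ ≤ √(∫ x, f x ^ 2 ∂μ) := by
  refine Real.le_sqrt_of_sq_le ?_
  have h := ProbabilityTheory.variance_nonneg f μ
  rw [ProbabilityTheory.variance_eq_sub hf] at h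
  simpa [sub_nonneg] using h

section Graph

variable {X Y : Type*} [PseudoMetricSpace X] [PseudoMetricSpace Y]
  [MeasurableSpace X] [MeasurableSpace Y] {μ : Measure (X × Y)} [IsFiniteMeasure μ] {u : X → Y}

lemma abs_integral_sub_integral_graph_le [OpensMeasurableSpace (X × Y)] (hu : Continuous u)
    (hdist : Integrable (fun z => dist z.2 (u z.1)) μ) {φ : X × Y → ℝ}
    (hφ : ∀ z, |φ z| ≤ 1) (hφ' : LipschitzWith 1 φ) :
    |∫ z, φ z ∂μ - ∫ z, φ (z.1, u z.1) ∂μ| ≤ ∫ z, dist z.2 (u z.1) ∂μ := by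
  have hcomp_int : ∀ f : X × Y → X × Y, Continuous f → Integrable (fun z => φ (f z)) μ :=
    fun f hf => .of_bound (hφ'.continuous.comp hf).aestronglyMeasurable 1
      (.of_forall fun z => hφ (f z))
  have hφ_int : Integrable φ μ := hcomp_int id continuous_id
  have hgraph_int : Integrable (fun z : X × Y => φ (z.1, u z.1)) μ :=
    hcomp_int _ (continuous_fst.prodMk (hu.comp continuous_fst))
  have hpointwise : ∀ z : X × Y, |φ z - φ (z.1, u z.1)| ≤ dist z.2 (u z.1) := fun z => by
    simpa [← Real.dist_eq, Prod.dist_eq] using hφ'.dist_le_mul z (z.1, u z.1)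
  rw [← integral_sub hφ_int hgraph_int]
  exact (abs_integral_le_integral_abs).trans
    (integral_mono (hφ_int.sub hgraph_int).abs hdist hpointwise)

theorem dBL_map_graph_le [BorelSpace X] [BorelSpace Y] [SecondCountableTopology Y]
    {ν : Measure X} [IsFiniteMeasure ν] {K : ℝ≥0} (hu : LipschitzWith K u)
    (hdist : Integrable (fun z => dist z.2 (u z.1)) μ) :
    dBL μ (ν.map fun x => (x, u x))
      ≤ ∫ z, dist z.2 (u z.1) ∂μ + max 1 K * dBL (μ.map Prod.fst) ν := by
  refine dBL_le_of_forall (add_nonneg (integral_nonneg fun z => dist_nonneg)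
    (mul_nonneg (by positivity) (dBL_nonneg _ _))) fun φ hφ hφ' => ?_
  set ψ : X → ℝ := fun x => φ (x, u x)
  have hψ : ∀ x, |ψ x| ≤ max 1 K := fun x => (hφ _).trans (by simp)
  have hψ' : LipschitzWith (max 1 K) ψ := by
    simpa [Function.comp_def] using hφ'.comp (LipschitzWith.id.prodMk hu)
  have hgraph : ∫ z, φ z ∂(ν.map fun x => (x, u x)) = ∫ x, ψ x ∂ν :=
    integral_map (measurable_id.prodMk hu.continuous.measurable).aemeasurable
      hφ'.continuous.aestronglyMeasurable
  have hfst : ∫ x, ψ x ∂(μ.map Prod.fst) = ∫ z, ψ z.1 ∂μ :=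
    integral_map measurable_fst.aemeasurable hψ'.continuous.aestronglyMeasurable
  have hmarginal := abs_integral_sub_le_mul_dBL (μ := μ.map Prod.fst) (ν := ν) hψ hψ'
  rw [hfst] at hmarginal
  rw [hgraph]
  calc |∫ z, φ z ∂μ - ∫ x, ψ x ∂ν|
      ≤ |∫ z, φ z ∂μ - ∫ z, ψ z.1 ∂μ| + |∫ z, ψ z.1 ∂μ - ∫ x, ψ x ∂ν| := abs_sub_le _ _ _
    _ ≤ _ := add_le_add (abs_integral_sub_integral_graph_le hu.continuous hdist hφ hφ')
        hmarginal

end Graph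

/-- convergence of the empirical measure: for a probability measure
`μ^N` on phase space with spatial marginal `ρ^N`, a probability density `ρ`, and a
bounded Lipschitz velocity field `u`,
`d_BL²(μ^N, ρδ_u) ≤ C ∫∫ |v−u(x)|² μ^N + C d_BL²(ρ^N, ρ)`,
with `C` depending only on `‖u‖_{Lip}`. -/
theorem empirical_measure_convergence
    (d : ℕ) (Lu : ℝ) :
    ∃ C : ℝ, 0 < C ∧
      ∀ (Cu : ℝ),
      ∀ (μ : Measure (EuclideanSpace ℝ (Fin d) × EuclideanSpace ℝ (Fin d))),
        IsProbabilityMeasure μ →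
        Integrable (fun z : EuclideanSpace ℝ (Fin d) × EuclideanSpace ℝ (Fin d) => ‖z.2‖ ^ 2) μ →
      ∀ (ρ : EuclideanSpace ℝ (Fin d) → ℝ),
        (∀ y, 0 ≤ ρ y) → Integrable ρ → (∫ y, ρ y) = 1 →
      ∀ (u : EuclideanSpace ℝ (Fin d) → EuclideanSpace ℝ (Fin d)),
        (∀ y, ‖u y‖ ≤ Cu) → LipschitzWith (Real.toNNReal Lu) u →
        dBL μ (monokinetic ρ u) ^ 2
          ≤ C * (∫ z, ‖z.2 - u z.1‖ ^ 2 ∂μ)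
            + C * dBL (μ.map Prod.fst)
                (volume.withDensity (fun y => ENNReal.ofReal (ρ y))) ^ 2 := by
  set K : ℝ≥0 := max 1 Lu.toNNReal
  refine ⟨2 * K ^ 2, by positivity, fun Cu μ _ hμ_sq ρ _ hρ _ u hu_bound hu => ?_⟩
  have : IsFiniteMeasure (volume.withDensity fun y => ENNReal.ofReal (ρ y)) :=
    isFiniteMeasure_withDensity_ofReal hρ.2
  have hdeviation : MemLp (fun z => ‖z.2 - u z.1‖) 2 μ :=
    (((memLp_two_iff_integrable_sq_norm continuous_snd.aestronglyMeasurable).2 hμ_sq).sub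
      (.of_bound (hu.continuous.comp continuous_fst).aestronglyMeasurable Cu
        (.of_forall fun z => hu_bound z.1))).norm
  have hkey := dBL_map_graph_le (ν := volume.withDensity fun y => ENNReal.ofReal (ρ y)) hu
    (by simpa only [dist_eq_norm] using hdeviation.integrable one_le_two)
  have hjensen := integral_le_sqrt_integral_sq hdeviation
  simp only [dist_eq_norm] at hkey
  rw [← monokinetic] at hkey
  set S := ∫ z, ‖z.2 - u z.1‖ ^ 2 ∂μ
  set D := dBL (μ.map Prod.fst) (volume.withDensity fun y => ENNReal.ofReal (ρ y))
  have hS : 0 ≤ S := integral_nonneg fun z => by positivity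
  have hbound : dBL μ (monokinetic ρ u) ≤ √S + K * D := by linarith
  calc dBL μ (monokinetic ρ u) ^ 2 ≤ (√S + K * D) ^ 2 := by
        gcongr; exact dBL_nonneg _ _
    _ ≤ 2 * K ^ 2 * S + 2 * K ^ 2 * D ^ 2 := by
        have hK : (1 : ℝ) ≤ K := by simp [K]
        nlinarith [Real.sq_sqrt hS, sq_nonneg (√S - K * D), one_le_pow₀ (n := 2) hK]
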